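/- arXiv:1804.04178 — 2 statements merged into one kernel-verified Lean document; each statement's English description precedes it below -/
import Mathlib

section
/- Splitting lemma for edit distance via min-plus: let d(i,j+1,i',j'+1) denote the edit distance between substrings s1[i..j] and s2[i'..j']. Then for any k with i ≤ k ≤ j, d(i,j+1,i',j'+1) = min over k' with i'-1 ≤ k' ≤ j' of ( d(i,k+1,i',k'+1) + d(k+1,j+1,k'+1,j'+1) ). -/
namespace Levenshtein

/-- Costs of the edit operations (as in the removed `Mathlib.Data.List.EditDistance.Defs`). -/
structure Cost (α β δ : Type*) where
  delete : α → δ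
  insert : β → δ
  substitute : α → β → δ

/-- The default cost: every operation costs 1, substituting equal letters costs 0. -/
def defaultCost {α : Type*} [DecidableEq α] : Cost α α ℕ where
  delete _ := 1
  insert _ := 1
  substitute a b := if a = b then 0 else 1

end Levenshtein

/-- The Levenshtein distance with cost `C`, by the recursion Mathlib's removed
`levenshtein` satisfied (`levenshtein_nil_nil`, `_nil_cons`, `_cons_nil`, `_cons_cons`). -/
def levenshtein {α β δ : Type*} [AddZeroClass δ] [Min δ] (C : Levenshtein.Cost α β δ) :
    List α → List β → δ
  | [], [] => 0
  | [], y :: ys => C.insert y + levenshtein C [] ys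
  | x :: xs, [] => C.delete x + levenshtein C xs []
  | x :: xs, y :: ys =>
    min (C.delete x + levenshtein C xs (y :: ys))
      (min (C.insert y + levenshtein C (x :: xs) ys) (C.substitute x y + levenshtein C xs ys))

/-- The edit (Levenshtein) distance between two strings. -/
def edit {α : Type*} [DecidableEq α] (s t : List α) : ℕ :=
  levenshtein Levenshtein.defaultCost s t

/-- The substring `s[a..b-1]` (half-open, 0-indexed): `d(i,j+1,i',j'+1)` of the paper
is `edit (sub s1 i (j+1)) (sub s2 i' (j'+1))`. -/
def sub {α : Type*} (s : List α) (a b : ℕ) : List α := (s.drop a).take (b - a)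


/-!
An alignment of `xs₁ ++ xs₂` with `ys` cuts `ys` into a prefix aligned with `xs₁` and a suffix
aligned with `xs₂`; conversely, alignments of `xs₁` with `ys₁` and of `xs₂` with `ys₂` concatenate
to one of `xs₁ ++ xs₂` with `ys₁ ++ ys₂`. Both halves hold for any cost with values in a linearly
ordered additive monoid and are proved by induction along the recursion defining `levenshtein`. The
substrings of the statement are then contiguous sublists, and cutting `s2[i'..j']` after `m`
letters is the split point `k'' = i' + m`.
-/

section Levenshtein

variable {α β δ : Type*} [AddCommMonoid δ] [LinearOrder δ] (C : Levenshtein.Cost α β δ)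

theorem levenshtein_cons_left_le (x : α) (xs : List α) (ys : List β) :
    levenshtein C (x :: xs) ys ≤ C.delete x + levenshtein C xs ys := by
  cases ys with
  | nil => exact (levenshtein.eq_3 C x xs).le
  | cons y ys => exact (levenshtein.eq_4 C x xs y ys).trans_le (min_le_left _ _)

theorem levenshtein_cons_right_le (xs : List α) (y : β) (ys : List β) :
    levenshtein C xs (y :: ys) ≤ C.insert y + levenshtein C xs ys := by
  cases xs with
  | nil => exact (levenshtein.eq_2 C y ys).le
  | cons x xs =>
    exact (levenshtein.eq_4 C x xs y ys).trans_le ((min_le_right _ _).trans (min_le_left _ _))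

theorem levenshtein_cons_cons_le (x : α) (xs : List α) (y : β) (ys : List β) :
    levenshtein C (x :: xs) (y :: ys) ≤ C.substitute x y + levenshtein C xs ys :=
  (levenshtein.eq_4 C x xs y ys).trans_le ((min_le_right _ _).trans (min_le_right _ _))

theorem levenshtein_append_le [IsOrderedAddMonoid δ] (xs₁ xs₂ : List α) (ys₁ ys₂ : List β) :
    levenshtein C (xs₁ ++ xs₂) (ys₁ ++ ys₂) ≤
      levenshtein C xs₁ ys₁ + levenshtein C xs₂ ys₂ := by
  induction xs₁ generalizing ys₁ with
  | nil =>
    induction ys₁ with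
    | nil => simp [levenshtein]
    | cons y ys ih =>
      calc levenshtein C xs₂ (y :: (ys ++ ys₂))
          ≤ C.insert y + levenshtein C ([] ++ xs₂) (ys ++ ys₂) :=
            levenshtein_cons_right_le C _ _ _
        _ ≤ C.insert y + (levenshtein C [] ys + levenshtein C xs₂ ys₂) := by gcongr
        _ = _ := by rw [levenshtein, add_assoc]
  | cons x xs ihx =>
    induction ys₁ with
    | nil =>
      calc levenshtein C (x :: (xs ++ xs₂)) ([] ++ ys₂)
          ≤ C.delete x + levenshtein C (xs ++ xs₂) ([] ++ ys₂) :=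
            levenshtein_cons_left_le C _ _ _
        _ ≤ C.delete x + (levenshtein C xs [] + levenshtein C xs₂ ys₂) := by gcongr; exact ihx _
        _ = _ := by rw [levenshtein, add_assoc]
    | cons y ys ihy =>
      rw [List.cons_append, List.cons_append, levenshtein.eq_4, levenshtein.eq_4,
        ← min_add_add_right, ← min_add_add_right, add_assoc, add_assoc, add_assoc]
      exact min_le_min (add_le_add le_rfl (ihx (y :: ys)))
        (min_le_min (add_le_add le_rfl ihy) (add_le_add le_rfl (ihx ys)))

theorem exists_levenshtein_take_add_drop_le [IsOrderedAddMonoid δ] (xs₁ xs₂ : List α)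
    (ys : List β) :
    ∃ m ≤ ys.length,
      levenshtein C xs₁ (ys.take m) + levenshtein C xs₂ (ys.drop m) ≤
        levenshtein C (xs₁ ++ xs₂) ys := by
  induction xs₁ generalizing ys with
  | nil => exact ⟨0, Nat.zero_le _, by simp [levenshtein]⟩
  | cons x xs ihx =>
    induction ys with
    | nil =>
      obtain ⟨m, hm, h⟩ := ihx []
      refine ⟨0, le_rfl, ?_⟩
      simp only [List.take_nil, List.drop_nil] at h ⊢
      rw [List.cons_append, levenshtein, levenshtein, add_assoc]
      gcongr
    | cons y ys ihy =>
      rw [List.cons_append, levenshtein.eq_4]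
      let P : δ → Prop := fun v => ∃ m ≤ (y :: ys).length,
        levenshtein C (x :: xs) ((y :: ys).take m) + levenshtein C xs₂ ((y :: ys).drop m) ≤ v
      refine min_rec' P ?_ (min_rec' P ?_ ?_)
      · obtain ⟨m, hm, h⟩ := ihx (y :: ys)
        refine ⟨m, hm, ?_⟩
        calc _ ≤ C.delete x + levenshtein C xs ((y :: ys).take m) +
              levenshtein C xs₂ ((y :: ys).drop m) := by
              gcongr; exact levenshtein_cons_left_le C _ _ _
          _ ≤ _ := by rw [add_assoc]; exact add_le_add le_rfl h
      · obtain ⟨m, hm, h⟩ := ihy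
        refine ⟨m + 1, Nat.succ_le_succ hm, ?_⟩
        simp only [List.take_succ_cons, List.drop_succ_cons]
        calc _ ≤ C.insert y + levenshtein C (x :: xs) (ys.take m) +
              levenshtein C xs₂ (ys.drop m) := by
              gcongr; exact levenshtein_cons_right_le C _ _ _
          _ ≤ _ := by rw [add_assoc]; exact add_le_add le_rfl h
      · obtain ⟨m, hm, h⟩ := ihx ys
        refine ⟨m + 1, Nat.succ_le_succ hm, ?_⟩
        simp only [List.take_succ_cons, List.drop_succ_cons]
        calc _ ≤ C.substitute x y + levenshtein C xs (ys.take m) +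
              levenshtein C xs₂ (ys.drop m) := by
              gcongr; exact levenshtein_cons_cons_le C _ _ _ _
          _ ≤ _ := by rw [add_assoc]; exact add_le_add le_rfl h

end Levenshtein

section Sub

variable {α : Type*} (s : List α)

theorem length_sub_le (a b : ℕ) : (sub s a b).length ≤ b - a :=
  List.length_take_le _ _

theorem sub_append_sub {a b c : ℕ} (hab : a ≤ b) (hbc : b ≤ c) :
    sub s a b ++ sub s b c = sub s a c := by
  unfold sub
  rw [show s.drop b = (s.drop a).drop (b - a) by rw [List.drop_drop]; congr 1; omega,
    show c - a = (b - a) + (c - b) by omega, List.take_add]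

theorem take_sub {a b m : ℕ} (h : m ≤ b - a) : (sub s a b).take m = sub s a (a + m) := by
  unfold sub
  rw [List.take_take, show a + m - a = m by omega, min_eq_left h]

theorem drop_sub (a b m : ℕ) : (sub s a b).drop m = sub s (a + m) b := by
  unfold sub
  rw [List.drop_take, List.drop_drop, show b - a - m = b - (a + m) by omega]

end Sub

/-- Splitting lemma for edit distance: for any split point `k` with `i ≤ k ≤ j`,
`d(i,j+1,i',j'+1)` equals the minimum over all split points `k'` with
`i'-1 ≤ k' ≤ j'` of `d(i,k+1,i',k'+1) + d(k+1,j+1,k'+1,j'+1)`.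
(Here `k''` ranges over `[i', j'+1]`, with `k'' = k' + 1`.) -/
theorem edit_split {α : Type*} [DecidableEq α] (s1 s2 : List α) (i j i' j' k : ℕ)
    (hik : i ≤ k) (hkj : k ≤ j) (hi'j' : i' ≤ j' + 1) :
    edit (sub s1 i (j + 1)) (sub s2 i' (j' + 1)) =
      (Finset.Icc i' (j' + 1)).inf' (Finset.nonempty_Icc.mpr hi'j')
        (fun k'' => edit (sub s1 i (k + 1)) (sub s2 i' k'') +
          edit (sub s1 (k + 1) (j + 1)) (sub s2 k'' (j' + 1))) := by
  rw [← sub_append_sub s1 (b := k + 1) (by omega) (by omega)]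
  apply le_antisymm
  · refine Finset.le_inf' _ _ fun k'' hk'' => ?_
    obtain ⟨hi'k'', hk''j'⟩ := Finset.mem_Icc.mp hk''
    rw [← sub_append_sub s2 hi'k'' hk''j']
    exact levenshtein_append_le Levenshtein.defaultCost _ _ _ _
  · obtain ⟨m, hm, hsplit⟩ := exists_levenshtein_take_add_drop_le Levenshtein.defaultCost
      (sub s1 i (k + 1)) (sub s1 (k + 1) (j + 1)) (sub s2 i' (j' + 1))
    have hm' : m ≤ j' + 1 - i' := hm.trans (length_sub_le s2 _ _)
    have hmem : i' + m ∈ Finset.Icc i' (j' + 1) := Finset.mem_Icc.mpr ⟨by omega, by omega⟩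
    refine (Finset.inf'_le _ hmem).trans ?_
    rw [← take_sub s2 hm', ← drop_sub s2 i' (j' + 1) m]
    exact hsplit
end

section
/- Non-crossing property of matchings induced by transformations: if a transformation of s1 into s2 matches s1[x1] to s2[y1] and s1[x2] to s2[y2] (both via no change or substitution), and x1 < x2, then y1 < y2. -/
/-- `Aligned i j s t M c` : there is a transformation (a sequence of insertions,
deletions and substitutions, processed left to right) of the string `s` into the
string `t`, of cost `c`, whose induced matching (the set of pairs of positions
`(x, y)` such that the character `s[x]` is transformed into `t[y]` by no change or
by a substitution) is `M`; positions in `M` are offset by `i` (in the first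
string) and `j` (in the second string). -/
inductive Aligned {α : Type*} : ℕ → ℕ → List α → List α → List (ℕ × ℕ) → ℕ → Prop
  | nil (i j : ℕ) : Aligned i j [] [] [] 0
  | delete {i j : ℕ} {s t : List α} {M : List (ℕ × ℕ)} {c : ℕ} (a : α) :
      Aligned (i + 1) j s t M c → Aligned i j (a :: s) t M (c + 1)
  | insert {i j : ℕ} {s t : List α} {M : List (ℕ × ℕ)} {c : ℕ} (b : α) :
      Aligned i (j + 1) s t M c → Aligned i j s (b :: t) M (c + 1)
  | substitute {i j : ℕ} {s t : List α} {M : List (ℕ × ℕ)} {c : ℕ} {a b : α} (h : a ≠ b) :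
      Aligned (i + 1) (j + 1) s t M c → Aligned i j (a :: s) (b :: t) ((i, j) :: M) (c + 1)
  | keep {i j : ℕ} {s t : List α} {M : List (ℕ × ℕ)} {c : ℕ} (a : α) :
      Aligned (i + 1) (j + 1) s t M c → Aligned i j (a :: s) (a :: t) ((i, j) :: M) c

/-- A transformation of `s` into `t` with induced matching `M` and cost `c`. -/
def Transforms {α : Type*} (s t : List α) (M : List (ℕ × ℕ)) (c : ℕ) : Prop :=
  Aligned 0 0 s t M c


lemma aligned_mem_bound {α : Type*} {i j : ℕ} {s t : List α} {M : List (ℕ × ℕ)} {c : ℕ}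
    (h : Aligned i j s t M c) : ∀ p ∈ M, i ≤ p.1 ∧ j ≤ p.2 := by
  induction h with
  | nil => simp
  | delete a _ ih => intro p hp; have := ih p hp; omega
  | insert b _ ih => intro p hp; have := ih p hp; omega
  | substitute _ _ ih =>
    intro p hp
    rcases List.mem_cons.1 hp with rfl | hp
    · simp
    · have := ih p hp; omega
  | keep a _ ih =>
    intro p hp
    rcases List.mem_cons.1 hp with rfl | hp
    · simp
    · have := ih p hp; omega

lemma aligned_noncrossing {α : Type*} {i j : ℕ} {s t : List α} {M : List (ℕ × ℕ)} {c : ℕ}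
    (h : Aligned i j s t M c) : ∀ {x1 y1 x2 y2 : ℕ},
    (x1, y1) ∈ M → (x2, y2) ∈ M → x1 < x2 → y1 < y2 := by
  induction h with
  | nil => simp
  | delete a _ ih => exact fun h1 h2 hx => ih h1 h2 hx
  | insert b _ ih => exact fun h1 h2 hx => ih h1 h2 hx
  | substitute _ hA ih =>
    intro x1 y1 x2 y2 h1 h2 hx
    rcases List.mem_cons.1 h1 with h1 | h1 <;> rcases List.mem_cons.1 h2 with h2 | h2
    · rw [Prod.mk.injEq] at h1 h2; omega
    · rw [Prod.mk.injEq] at h1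
      have := (aligned_mem_bound hA (x2, y2) h2).2
      omega
    · rw [Prod.mk.injEq] at h2
      have := (aligned_mem_bound hA (x1, y1) h1).1
      omega
    · exact ih h1 h2 hx
  | keep a hA ih =>
    intro x1 y1 x2 y2 h1 h2 hx
    rcases List.mem_cons.1 h1 with h1 | h1 <;> rcases List.mem_cons.1 h2 with h2 | h2
    · rw [Prod.mk.injEq] at h1 h2; omega
    · rw [Prod.mk.injEq] at h1
      have := (aligned_mem_bound hA (x2, y2) h2).2
      omega
    · rw [Prod.mk.injEq] at h2
      have := (aligned_mem_bound hA (x1, y1) h1).1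
      omega
    · exact ih h1 h2 hx

/-- Non-crossing property of matchings induced by transformations: if a
transformation matches `s1[x1]` to `s2[y1]` and `s1[x2]` to `s2[y2]`, and
`x1 < x2`, then `y1 < y2`. -/
theorem matching_noncrossing {α : Type*} {s1 s2 : List α} {M : List (ℕ × ℕ)} {c : ℕ}
    (h : Transforms s1 s2 M c) {x1 y1 x2 y2 : ℕ}
    (h1 : (x1, y1) ∈ M) (h2 : (x2, y2) ∈ M) (hx : x1 < x2) : y1 < y2 :=
  aligned_noncrossing h h1 h2 hx
end
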